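/- Correctness of the HyperLTL₂ model-checking algorithm: let φ be the HyperLTL formula ∀π₁…∀π_k ∃π_{k+1}…∃π_{k+j} ψ with ψ quantifier-free, let n = k + j, and let K be a Kripke structure. Then K satisfies φ if and only if the language L( ((A^n_K ∩ A_ψ)|_k)^C ∩ A^k_K ) is empty. -/
import Mathlib


/-- Traces: infinite sequences of valuations over the atomic propositions. -/
abbrev Trace (AP : Type) := ℕ → Set AP

/-- Kripke structures over atomic propositions `AP` with states `S`. -/
structure Kripke (AP : Type) (S : Type) where
  init : S
  next : S → Set S
  next_nonempty : ∀ s, (next s).Nonempty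
  label : S → Set AP

/-- The set of traces of a Kripke structure. -/
def Kripke.Traces {AP S : Type} (K : Kripke AP S) : Set (Trace AP) :=
  { t | ∃ r : ℕ → S, r 0 = K.init ∧ (∀ i, r (i + 1) ∈ K.next (r i)) ∧
        ∀ i, t i = K.label (r i) }

/-- n-tuples of traces, indexed by the trace variables `π₁, …, πₙ`. -/
abbrev TTuple (AP : Type) (n : ℕ) := Fin n → Trace AP

/-- The suffix `Π[i,∞]` of a tuple of traces. -/
def TTuple.drop {AP : Type} {n : ℕ} (Pa : TTuple AP n) (i : ℕ) : TTuple AP n :=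
  fun j m => Pa j (i + m)

/-- Quantifier-free HyperLTL formulas over trace variables `π₁, …, πₙ`. -/
inductive QF (AP : Type) (n : ℕ) : Type where
  | atom : AP → Fin n → QF AP n
  | neg  : QF AP n → QF AP n
  | or   : QF AP n → QF AP n → QF AP n
  | and  : QF AP n → QF AP n → QF AP n
  | next : QF AP n → QF AP n
  | untl : QF AP n → QF AP n → QF AP n
  | rels : QF AP n → QF AP n → QF AP n

namespace QF

variable {AP : Type} {n : ℕ}

/-- Satisfaction `Π ⊨_∅ φ` of a quantifier-free formula by an n-tuple of traces
(`φ₁ R φ₂ ≡ ¬(¬φ₁ U ¬φ₂)`). -/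
def sat : TTuple AP n → QF AP n → Prop
  | Pa, atom a j => a ∈ Pa j 0
  | Pa, neg φ => ¬ sat Pa φ
  | Pa, or φ ψ => sat Pa φ ∨ sat Pa ψ
  | Pa, and φ ψ => sat Pa φ ∧ sat Pa ψ
  | Pa, next φ => sat (Pa.drop 1) φ
  | Pa, untl φ ψ => ∃ i, sat (Pa.drop i) ψ ∧ ∀ j < i, sat (Pa.drop j) φ
  | Pa, rels φ ψ => ¬ ∃ i, ¬ sat (Pa.drop i) ψ ∧ ∀ j < i, ¬ sat (Pa.drop j) φ

/-- `zip` turns an n-tuple of traces into a word over the alphabet `(2^AP)ⁿ`. -/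
def zipT (Pa : TTuple AP n) : ℕ → Fin n → Set AP := fun i j => Pa j i

/-- `unzip` turns a word over the alphabet `(2^AP)ⁿ` into an n-tuple of traces. -/
def unzipT (w : ℕ → Fin n → Set AP) : TTuple AP n := fun j i => w i j

end QF

/-- The language of the m-fold self-composition `A^m_K` of a Büchi automaton for `K`:
all words `zip(t₁, …, tₘ)` with `t₁, …, tₘ ∈ Traces(K)`. -/
def LangK {AP S : Type} (K : Kripke AP S) (m : ℕ) : Set (ℕ → Fin m → Set AP) :=
  { w | ∃ ts : TTuple AP m, (∀ i, ts i ∈ K.Traces) ∧ w = QF.zipT ts }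

/-- The language of the automaton `A_ψ` for the quantifier-free formula ψ:
all words `zip(Π)` with `Π ⊨_∅ ψ`. -/
def LangF {AP : Type} {m : ℕ} (ψ : QF AP m) : Set (ℕ → Fin m → Set AP) :=
  { w | QF.sat (QF.unzipT w) ψ }

/-- The projection `A|_k`: every transition label (an n-tuple) is projected to its first
k components, so a word is in the projected language iff some extension of it is in the
original language. -/
def projLang {AP : Type} {k j : ℕ} (L : Set (ℕ → Fin (k + j) → Set AP)) :
    Set (ℕ → Fin k → Set AP) :=
  (fun w => fun i (l : Fin k) => w i (Fin.castAdd j l)) '' L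

/-- `K` satisfies the HyperLTL formula `∀π₁…∀π_k ∃π_{k+1}…∃π_{k+j} ψ`. -/
def modelsForallExists {AP S : Type} (K : Kripke AP S) (k j : ℕ)
    (ψ : QF AP (k + j)) : Prop :=
  ∀ ts : TTuple AP k, (∀ i, ts i ∈ K.Traces) →
    ∃ us : TTuple AP j, (∀ i, us i ∈ K.Traces) ∧ QF.sat (Fin.append ts us) ψ

/-- **Correctness of the HyperLTL₂ model-checking algorithm**: for the HyperLTL formula
φ = ∀π₁…∀π_k ∃π_{k+1}…∃π_{k+j} ψ with ψ quantifier-free, n = k + j, and a Kripke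
structure K: K satisfies φ iff `L( ((A^n_K ∩ A_ψ)|_k)^C ∩ A^k_K ) = ∅`. -/
theorem hyperltl2_model_checking_correct (AP S : Type) (K : Kripke AP S) (k j : ℕ)
    (ψ : QF AP (k + j)) :
    modelsForallExists K k j ψ ↔
      (projLang (LangK K (k + j) ∩ LangF ψ))ᶜ ∩ LangK K k = ∅ := by
  have hsub : ((projLang (LangK K (k + j) ∩ LangF ψ))ᶜ ∩ LangK K k = ∅) ↔
      LangK K k ⊆ projLang (LangK K (k + j) ∩ LangF ψ) := by
    constructor
    · intro h w hw
      by_contra hc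
      have : w ∈ (projLang (LangK K (k + j) ∩ LangF ψ))ᶜ ∩ LangK K k := ⟨hc, hw⟩
      rw [h] at this; exact this
    · intro h
      ext w
      simp only [Set.mem_inter_iff, Set.mem_compl_iff, Set.mem_empty_iff_false, iff_false,
        not_and]
      intro hc hw; exact hc (h hw)
  rw [hsub]
  constructor
  · intro hm w hw
    obtain ⟨ts, hts, rfl⟩ := hw
    obtain ⟨us, hus, hsat⟩ := hm ts hts
    refine ⟨QF.zipT (Fin.append ts us), ⟨⟨Fin.append ts us, ?_, rfl⟩, ?_⟩, ?_⟩
    · intro i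
      refine Fin.addCases (fun l => ?_) (fun l => ?_) i
      · rw [Fin.append_left]; exact hts l
      · rw [Fin.append_right]; exact hus l
    · show QF.sat (QF.unzipT (QF.zipT (Fin.append ts us))) ψ
      exact hsat
    · funext i l
      show Fin.append ts us (Fin.castAdd j l) i = ts l i
      rw [Fin.append_left]
  · intro h ts hts
    obtain ⟨v, ⟨⟨vs, hvs, rfl⟩, hsat⟩, hproj⟩ := h ⟨ts, hts, rfl⟩
    refine ⟨fun i => vs (Fin.natAdd k i), fun i => hvs _, ?_⟩
    have heq : Fin.append ts (fun i => vs (Fin.natAdd k i)) = vs := by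
      funext i
      refine Fin.addCases (fun l => ?_) (fun l => ?_) i
      · rw [Fin.append_left]
        have := congrFun (congrFun hproj 0) l
        funext m
        exact (congrFun (congrFun hproj m) l).symm
      · rw [Fin.append_right]
    rw [heq]
    exact hsat
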